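/- arXiv:0806.4717 — 7 statements merged into one kernel-verified Lean document; each statement's English description precedes it below -/
import Mathlib

section
/- In a group G with elements τ₁,…,τ_{p-1} satisfying τᵢ² = 1 and τᵢτⱼ = τⱼτᵢ for |i-j| > 1, setting δ = τ₁τ₂⋯τ_{p-1}, γ = (τ₁⋯τ_{p-1})(τ₁⋯τ_{p-2})⋯τ₁, and γ* = (τ_{p-1}⋯τ₁)(τ_{p-1}⋯τ₂)⋯τ_{p-1}, one has δ^p = γγ*. -/
namespace Stmt1Aux

variable {G : Type*} [Group G]

def Aw (τ : ℕ → G) (k : ℕ) : G := ((List.range' 1 k).map τ).prod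

def Dw (p : ℕ) (τ : ℕ → G) (j : ℕ) : G := (((List.range' j (p - j)).reverse).map τ).prod

lemma Aw_succ (τ : ℕ → G) (k : ℕ) : Aw τ (k + 1) = Aw τ k * τ (k + 1) := by
  simp [Aw, List.range'_concat, Nat.add_comm 1 k]

lemma Dw_eq (p : ℕ) (τ : ℕ → G) (j : ℕ) (h : j < p) :
    Dw p τ j = Dw p τ (j + 1) * τ j := by
  have h1 : p - j = (p - (j + 1)) + 1 := by omega
  rw [Dw, Dw, h1, List.range'_succ]
  simp

lemma comm_AD (p : ℕ) (τ : ℕ → G)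
    (hcomm : ∀ i j, 1 ≤ i → j ≤ p - 1 → i + 1 < j → τ i * τ j = τ j * τ i)
    (k j : ℕ) (hj : j ≤ p) (h : k + 1 < j) : Commute (Aw τ k) (Dw p τ j) := by
  apply Commute.list_prod_right
  intro x hx
  simp only [List.mem_map, List.mem_reverse, List.mem_range'_1] at hx
  obtain ⟨l, ⟨hl1, hl2⟩, rfl⟩ := hx
  apply Commute.list_prod_left
  intro y hy
  simp only [List.mem_map, List.mem_range'_1] at hy
  obtain ⟨i, ⟨hi1, hi2⟩, rfl⟩ := hy
  exact hcomm i l hi1 (by omega) (by omega)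

lemma micro (p : ℕ) (τ : ℕ → G)
    (hcomm : ∀ i j, 1 ≤ i → j ≤ p - 1 → i + 1 < j → τ i * τ j = τ j * τ i)
    (m : ℕ) (h1 : 1 ≤ m) (h2 : m < p) :
    Dw p τ (m + 1) * Aw τ m = Aw τ (m - 1) * Dw p τ m := by
  have hm : m = (m - 1) + 1 := by omega
  rw [Dw_eq p τ m h2]
  conv_lhs => rw [hm, Aw_succ, ← hm]
  have hc := comm_AD p τ hcomm (m - 1) (m + 1) (by omega) (by omega)
  rw [← mul_assoc, ← mul_assoc, ← hc.eq]

lemma Ldesc (p : ℕ) (τ : ℕ → G) (hp : 2 ≤ p)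
    (hcomm : ∀ i j, 1 ≤ i → j ≤ p - 1 → i + 1 < j → τ i * τ j = τ j * τ i) :
    ∀ t m, p - 1 = m + t → 1 ≤ m →
      ((List.range' (m + 1) (p - 1 - m)).map (Dw p τ)).prod * Aw τ (p - 1)
        = Aw τ (m - 1) * ((List.range' m (p - m)).map (Dw p τ)).prod := by
  intro t
  induction t with
  | zero =>
    intro m hm h1
    have h2 : p - 1 - m = 0 := by omega
    have h3 : p - m = 1 := by omega
    rw [h2, h3]
    simp only [List.range'_zero, List.map_nil, List.prod_nil, one_mul,
      List.range'_one, List.map_cons, List.map_nil, List.prod_cons, List.prod_nil, mul_one]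
    have hD : Dw p τ m = τ m := by
      rw [Dw, h3]
      simp
    rw [hD]
    have h5 : m = p - 1 := by omega
    subst h5
    have h4 : p - 1 = (p - 1 - 1) + 1 := by omega
    conv_lhs => rw [h4, Aw_succ]
    rw [← h4]
  | succ t ih =>
    intro m hm h1
    have e1 : p - 1 - m = t + 1 := by omega
    rw [e1, List.range'_succ]
    simp only [List.map_cons, List.prod_cons]
    have ihm := ih (m + 1) (by omega) (by omega)
    have e2 : p - 1 - (m + 1) = t := by omega
    rw [e2] at ihm
    rw [mul_assoc, ihm]
    have e3 : (m + 1) - 1 = m := by omega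
    rw [e3, ← mul_assoc, micro p τ hcomm m h1 (by omega)]
    have e4 : p - m = (p - (m + 1)) + 1 := by omega
    rw [e4, List.range'_succ]
    simp [mul_assoc]

lemma main (p : ℕ) (τ : ℕ → G) (hp : 2 ≤ p)
    (hcomm : ∀ i j, 1 ≤ i → j ≤ p - 1 → i + 1 < j → τ i * τ j = τ j * τ i) :
    ∀ k, k ≤ p - 1 →
      (Aw τ (p - 1)) ^ (k + 1)
        = ((List.range (k + 1)).map (fun i => Aw τ (p - 1 - i))).prod
          * ((List.range' (p - k) k).map (Dw p τ)).prod := by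
  intro k
  induction k with
  | zero =>
    intro _
    have h1 : List.range 1 = [0] := rfl
    simp only [zero_add, pow_one, h1, List.map_cons, List.map_nil,
      List.prod_cons, List.prod_nil, mul_one, Nat.sub_zero, List.range'_zero, one_mul]
  | succ k ih =>
    intro hk
    have hk' : k ≤ p - 1 := by omega
    rw [pow_succ, ih hk', mul_assoc]
    have key := Ldesc p τ hp hcomm k (p - 1 - k) (by omega) (by omega)
    have e2 : p - 1 - (p - 1 - k) = k := by omega
    have e4 : p - (p - 1 - k) = k + 1 := by omega
    rw [e2, e4] at key
    have e1 : p - 1 - k + 1 = p - k := by omega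
    rw [e1] at key
    have e3 : p - 1 - k - 1 = p - 1 - (k + 1) := by omega
    rw [e3] at key
    have e5 : p - 1 - k = p - (k + 1) := by omega
    rw [e5] at key
    rw [key]
    conv_rhs => rw [List.range_succ]
    simp [mul_assoc]

lemma Aprod (τ : ℕ → G) (n : ℕ) :
    ((List.range (n + 1)).map (fun i => Aw τ (n - i))).prod
      = ((List.range n).reverse.map (fun k => Aw τ (k + 1))).prod := by
  rw [List.range_succ]
  simp only [List.map_append, List.prod_append, List.map_cons, List.map_nil,
    List.prod_cons, List.prod_nil, mul_one, Nat.sub_self]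
  have hz : Aw τ 0 = 1 := rfl
  rw [hz, mul_one]
  rw [List.range_eq_range', List.reverse_range', List.map_map, ← List.range_eq_range']
  apply congrArg List.prod
  apply List.map_congr_left
  intro a ha
  rw [List.mem_range] at ha
  show Aw τ (n - a) = Aw τ (0 + n - 1 - a + 1)
  congr 1
  omega

end Stmt1Aux

/-- In a group `G` with `τᵢ² = 1` and `τᵢτⱼ = τⱼτᵢ` for `|i-j| > 1`,
with `δ = τ₁⋯τ_{p-1}`, `γ = (τ₁⋯τ_{p-1})(τ₁⋯τ_{p-2})⋯τ₁`, and
`γ* = (τ_{p-1}⋯τ₁)(τ_{p-1}⋯τ₂)⋯τ_{p-1}`, one has `δ^p = γγ*`. -/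
theorem stmt1 {G : Type*} [Group G] (p : ℕ) (hp : 2 ≤ p) (τ : ℕ → G)
    (hsq : ∀ i, 1 ≤ i → i ≤ p - 1 → τ i * τ i = 1)
    (hcomm : ∀ i j, 1 ≤ i → j ≤ p - 1 → i + 1 < j → τ i * τ j = τ j * τ i)
    (δ γ γs : G)
    (hδ : δ = ((List.range' 1 (p - 1)).map τ).prod)
    (hγ : γ = (((List.range (p - 1)).reverse).map
      (fun k => (((List.range' 1 (k + 1)).map τ).prod))).prod)
    (hγs : γs = ((List.range' 1 (p - 1)).map
      (fun k => ((((List.range' k (p - k)).reverse).map τ).prod))).prod) :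
    δ ^ p = γ * γs := by
  subst hδ hγ hγs
  have key := Stmt1Aux.main p τ hp hcomm (p - 1) le_rfl
  have e0 : p - 1 + 1 = p := by omega
  have e1 : p - (p - 1) = 1 := by omega
  rw [e0, e1] at key
  have hA : ((List.range' 1 (p - 1)).map τ).prod = Stmt1Aux.Aw τ (p - 1) := rfl
  rw [hA, key]
  congr 1
  · have hAP := Stmt1Aux.Aprod τ (p - 1)
    rw [e0] at hAP
    exact hAP
end

section
/- In a group G with elements τ₁,…,τ_{p-1} satisfying τᵢ² = 1 and τᵢτⱼ = τⱼτᵢ for |i-j| > 1, setting δ = τ₁τ₂⋯τ_{p-1} and γ = (τ₁⋯τ_{p-1})(τ₁⋯τ_{p-2})⋯τ₁, one has δγ = γδ⁻¹. -/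
section Aux

variable {G : Type*} [Group G]

/-- `DD τ n = τ₁ ⋯ τₙ`. -/
def DD (τ : ℕ → G) (n : ℕ) : G := ((List.range' 1 n).map τ).prod

/-- `RR τ n = τₙ ⋯ τ₁`. -/
def RR (τ : ℕ → G) (n : ℕ) : G := (((List.range' 1 n).map τ).reverse).prod

/-- `GG τ n = Dₙ D_{n-1} ⋯ D₁`. -/
def GG (τ : ℕ → G) : ℕ → G
  | 0 => 1
  | (n + 1) => DD τ (n + 1) * GG τ n

lemma DD_succ (τ : ℕ → G) (n : ℕ) : DD τ (n + 1) = DD τ n * τ (n + 1) := by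
  simp [DD, List.range'_concat, Nat.add_comm]

lemma RR_succ (τ : ℕ → G) (n : ℕ) : RR τ (n + 1) = τ (n + 1) * RR τ n := by
  simp [RR, List.range'_concat, Nat.add_comm]

lemma GG_eq (τ : ℕ → G) (n : ℕ) :
    (((List.range n).reverse).map
      (fun k => (((List.range' 1 (k + 1)).map τ).prod))).prod = GG τ n := by
  induction n with
  | zero => simp [GG]
  | succ n ih =>
    rw [List.range_succ, List.reverse_append]
    simp only [List.reverse_singleton, List.singleton_append, List.map_cons, List.prod_cons, ih]
    rfl

section Rel

variable {p : ℕ} {τ : ℕ → G}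
  (hsq : ∀ i, 1 ≤ i → i ≤ p - 1 → τ i * τ i = 1)
  (hcomm : ∀ i j, 1 ≤ i → j ≤ p - 1 → i + 1 < j → τ i * τ j = τ j * τ i)

include hcomm in
lemma comm_DD : ∀ k j, k + 1 < j → j ≤ p - 1 → τ j * DD τ k = DD τ k * τ j := by
  intro k
  induction k with
  | zero => intro j _ _; simp [DD]
  | succ k ih =>
    intro j h1 h2
    rw [DD_succ, ← mul_assoc, ih j (by omega) h2, mul_assoc, mul_assoc,
      hcomm (k + 1) j (by omega) h2 (by omega)]

include hcomm in
lemma comm_GG : ∀ m j, m + 1 < j → j ≤ p - 1 → τ j * GG τ m = GG τ m * τ j := by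
  intro m
  induction m with
  | zero => intro j _ _; simp [GG]
  | succ m ih =>
    intro j h1 h2
    show τ j * (DD τ (m + 1) * GG τ m) = (DD τ (m + 1) * GG τ m) * τ j
    rw [← mul_assoc, comm_DD hcomm (m + 1) j h1 h2, mul_assoc, ih j (by omega) h2,
      mul_assoc]

include hcomm in
lemma key_L : ∀ n, n + 1 ≤ p - 1 → DD τ (n + 1) * GG τ n = GG τ n * RR τ (n + 1) := by
  intro n
  induction n with
  | zero =>
    intro _
    show DD τ 1 * 1 = 1 * RR τ 1
    simp [DD, RR]
  | succ n ih =>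
    intro h
    have ih' := ih (by omega)
    show (DD τ (n + 2)) * (DD τ (n + 1) * GG τ n) = (DD τ (n + 1) * GG τ n) * RR τ (n + 2)
    rw [DD_succ τ (n + 1)]
    calc DD τ (n + 1) * τ (n + 2) * (DD τ (n + 1) * GG τ n)
        = DD τ (n + 1) * (τ (n + 2) * (GG τ n * RR τ (n + 1))) := by
          rw [ih']; group
      _ = DD τ (n + 1) * (GG τ n * (τ (n + 2) * RR τ (n + 1))) := by
          rw [← mul_assoc (τ (n + 2)), comm_GG hcomm n (n + 2) (by omega) h, mul_assoc]
      _ = (DD τ (n + 1) * GG τ n) * RR τ (n + 2) := by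
          rw [← RR_succ]; group
      _ = (DD τ (n + 1) * GG τ n) * RR τ (n + 2) := rfl

include hsq in
lemma DD_RR : ∀ n, n ≤ p - 1 → DD τ n * RR τ n = 1 := by
  intro n
  induction n with
  | zero => simp [DD, RR]
  | succ n ih =>
    intro h
    rw [DD_succ, RR_succ, mul_assoc, ← mul_assoc (τ (n + 1)),
      hsq (n + 1) (by omega) h, one_mul, ih (by omega)]

end Rel

end Aux

/-- In a group `G` with `τᵢ² = 1` and `τᵢτⱼ = τⱼτᵢ` for `|i-j| > 1`,
with `δ = τ₁⋯τ_{p-1}` and `γ = (τ₁⋯τ_{p-1})(τ₁⋯τ_{p-2})⋯τ₁`, one has `δγ = γδ⁻¹`. -/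
theorem stmt2 {G : Type*} [Group G] (p : ℕ) (hp : 2 ≤ p) (τ : ℕ → G)
    (hsq : ∀ i, 1 ≤ i → i ≤ p - 1 → τ i * τ i = 1)
    (hcomm : ∀ i j, 1 ≤ i → j ≤ p - 1 → i + 1 < j → τ i * τ j = τ j * τ i)
    (δ γ : G)
    (hδ : δ = ((List.range' 1 (p - 1)).map τ).prod)
    (hγ : γ = (((List.range (p - 1)).reverse).map
      (fun k => (((List.range' 1 (k + 1)).map τ).prod))).prod) :
    δ * γ = γ * δ⁻¹ := by
  obtain ⟨n, hn⟩ : ∃ n, p - 1 = n + 1 := ⟨p - 2, by omega⟩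
  have hδ' : δ = DD τ (n + 1) := by rw [hδ, hn]; rfl
  have hγ' : γ = DD τ (n + 1) * GG τ n := by
    rw [hγ, hn, GG_eq]; rfl
  have hL := key_L hcomm n (by omega)
  have hinv : δ⁻¹ = RR τ (n + 1) := by
    rw [inv_eq_iff_mul_eq_one.mpr ?_]
    rw [hδ', DD_RR hsq (n + 1) (by omega)]
  rw [hγ', hinv, hδ', mul_assoc (DD τ (n+1)), hL]
end

section
/- For a finite poset P on p elements, the evacuation operator ε = (τ₁τ₂⋯τ_{p-1})(τ₁τ₂⋯τ_{p-2})⋯(τ₁τ₂)(τ₁) on the set of linear extensions of P is an involution: ε² is the identity. -/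
open scoped Classical in
/-- The operator `τ` acting at (0-based) positions `i, i+1` of a word: it swaps the
entries in positions `i` and `i+1` if they are incomparable in `α`, and otherwise
fixes the word.  (This is the operator `τ_{i+1}` of the paper, in 1-based indexing.) -/
noncomputable def tauP {α : Type*} [PartialOrder α] (i : ℕ) (l : List α) : List α :=
  if h : i + 1 < l.length then
    if l[i]'(Nat.lt_of_succ_lt h) ≤ l[i + 1]'h ∨ l[i + 1]'h ≤ l[i]'(Nat.lt_of_succ_lt h) then l
    else (l.set i (l[i + 1]'h)).set (i + 1) (l[i]'(Nat.lt_of_succ_lt h))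
  else l

/-- `l` is a linear extension of the finite poset `α`, written as a word:
it lists every element exactly once, and comparable elements appear in order. -/
def IsLinExt {α : Type*} [PartialOrder α] (l : List α) : Prop :=
  l.Nodup ∧ (∀ x : α, x ∈ l) ∧
    ∀ i j : Fin l.length, l.get i < l.get j → (i : ℕ) < (j : ℕ)

/-- Apply a sequence of the operators `τ` (given by their 0-based indices),
left to right. -/
noncomputable def applyTau {α : Type*} [PartialOrder α] (is : List ℕ) (l : List α) : List α :=
  is.foldl (fun acc i => tauP i acc) l

/-- Indices (0-based) of the promotion operator `∂ = τ₁τ₂⋯τ_{p-1}`. -/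
def promoIdx (p : ℕ) : List ℕ := List.range (p - 1)

/-- Indices (0-based) of the evacuation operator
`ε = (τ₁⋯τ_{p-1})(τ₁⋯τ_{p-2})⋯(τ₁τ₂)τ₁`. -/
def evacIdx (p : ℕ) : List ℕ :=
  (((List.range (p - 1)).reverse).map (fun k => List.range (k + 1))).flatten

/-- Indices (0-based) of the dual evacuation operator
`ε* = (τ_{p-1}⋯τ₁)(τ_{p-1}⋯τ₂)⋯τ_{p-1}`. -/
def dualEvacIdx (p : ℕ) : List ℕ :=
  ((List.range (p - 1)).map (fun k => ((List.range' k (p - 1 - k))).reverse)).flatten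

/-!
The argument rests only on the relations `τᵢ² = 1` and `τᵢ τⱼ = τⱼ τᵢ` for `|i - j| ≥ 2`.
Writing `∂ₙ = τ₁⋯τₙ` (applied left to right), evacuation satisfies `εₙ₊₁ = ∂ₙ₊₁ εₙ`, and the
far-commutation relations give `εₙ ∂ₙ₊₁ = ∂ₙ₊₁⁻¹ εₙ` by induction on `n`.
Hence `εₙ₊₁² = ∂ₙ₊₁ εₙ ∂ₙ₊₁ εₙ = ∂ₙ₊₁ ∂ₙ₊₁⁻¹ εₙ εₙ = 1`, again by induction.
-/

open Function

section InvolutiveFamily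

variable {β : Type*} {f : ℕ → β → β}

/-- The letters of `w` act left to right, as the `τᵢ` do in `applyTau`. -/
def actWord (f : ℕ → β → β) (w : List ℕ) (x : β) : β :=
  w.foldl (fun x i => f i x) x

@[simp]
lemma actWord_nil (x : β) : actWord f [] x = x := rfl

@[simp]
lemma actWord_cons (i : ℕ) (w : List ℕ) (x : β) : actWord f (i :: w) x = actWord f w (f i x) :=
  rfl

lemma actWord_append (w₁ w₂ : List ℕ) (x : β) :
    actWord f (w₁ ++ w₂) x = actWord f w₂ (actWord f w₁ x) :=
  List.foldl_append

lemma actWord_reverse_actWord (hf : ∀ i, Involutive (f i)) (w : List ℕ) (x : β) :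
    actWord f w.reverse (actWord f w x) = x := by
  induction w generalizing x with
  | nil => rfl
  | cons i w ih => rw [actWord_cons, List.reverse_cons, actWord_append, ih, actWord_cons,
      actWord_nil, hf i]

lemma actWord_actWord_reverse (hf : ∀ i, Involutive (f i)) (w : List ℕ) (x : β) :
    actWord f w (actWord f w.reverse x) = x := by
  simpa using actWord_reverse_actWord hf w.reverse x

lemma commute_actWord (hfar : ∀ i j, i + 2 ≤ j → Function.Commute (f i) (f j)) {j : ℕ}
    {w : List ℕ} (hw : ∀ i ∈ w, i + 2 ≤ j) : Function.Commute (f j) (actWord f w) := by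
  induction w with
  | nil => exact fun _ => rfl
  | cons i w ih =>
    intro x
    rw [actWord_cons, actWord_cons, ih (fun k hk => hw k (List.mem_cons_of_mem i hk)),
      hfar i j (hw i List.mem_cons_self) x]

/-- The evacuation word `(τ₁⋯τₙ)(τ₁⋯τₙ₋₁)⋯τ₁`, with 0-based letters. -/
def evacWord : ℕ → List ℕ
  | 0 => []
  | n + 1 => List.range (n + 1) ++ evacWord n

lemma lt_of_mem_evacWord {i n : ℕ} (h : i ∈ evacWord n) : i < n := by
  induction n with
  | zero => simp [evacWord] at h
  | succ n ih =>
    rcases List.mem_append.mp h with h | h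
    · exact List.mem_range.mp h
    · exact Nat.lt_succ_of_lt (ih h)

lemma actWord_evacWord_succ (n : ℕ) (x : β) :
    actWord f (evacWord (n + 1)) x = actWord f (evacWord n) (actWord f (List.range (n + 1)) x) :=
  actWord_append _ _ x

lemma actWord_range_actWord_evacWord (hf : ∀ i, Involutive (f i))
    (hfar : ∀ i j, i + 2 ≤ j → Function.Commute (f i) (f j)) (n : ℕ) (x : β) :
    actWord f (List.range (n + 1)) (actWord f (evacWord n) x)
      = actWord f (evacWord n) (actWord f (List.range (n + 1)).reverse x) := by
  induction n generalizing x with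
  | zero => simp [evacWord]
  | succ n ih =>
    have hcomm : Function.Commute (f (n + 1)) (actWord f (evacWord n)) :=
      commute_actWord hfar fun i hi => by have := lt_of_mem_evacWord hi; omega
    calc actWord f (List.range (n + 2)) (actWord f (evacWord (n + 1)) x)
        = f (n + 1) (actWord f (List.range (n + 1))
            (actWord f (evacWord n) (actWord f (List.range (n + 1)) x))) := by
          rw [actWord_evacWord_succ, List.range_succ, actWord_append, actWord_cons, actWord_nil]
      _ = f (n + 1) (actWord f (evacWord n) (actWord f (List.range (n + 1)).reverse
            (actWord f (List.range (n + 1)) x))) := by rw [ih]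
      _ = actWord f (evacWord n) (f (n + 1) x) := by rw [actWord_reverse_actWord hf, hcomm]
      _ = actWord f (evacWord (n + 1)) (actWord f (List.range (n + 2)).reverse x) := by
          rw [actWord_evacWord_succ, List.range_succ (n := n + 1), List.reverse_append,
            List.reverse_singleton, List.singleton_append, actWord_cons,
            actWord_actWord_reverse hf]

lemma actWord_evacWord_involutive (hf : ∀ i, Involutive (f i))
    (hfar : ∀ i j, i + 2 ≤ j → Function.Commute (f i) (f j)) (n : ℕ) :
    Involutive (actWord f (evacWord n)) := by
  induction n with
  | zero => exact fun _ => rfl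
  | succ n ih =>
    intro x
    rw [actWord_evacWord_succ, actWord_evacWord_succ, actWord_range_actWord_evacWord hf hfar,
      actWord_reverse_actWord hf, ih]

end InvolutiveFamily

lemma evacIdx_eq_evacWord (p : ℕ) : evacIdx p = evacWord (p - 1) := by
  rw [evacIdx]
  induction p - 1 with
  | zero => rfl
  | succ n ih =>
    rw [List.range_succ, List.reverse_append, List.reverse_singleton, List.singleton_append,
      List.map_cons, List.flatten_cons, ih, evacWord]

section Tau

variable {α : Type*} [PartialOrder α]

lemma applyTau_eq_actWord (w : List ℕ) (l : List α) : applyTau w l = actWord tauP w l := rfl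

lemma tauP_of_length_le {i : ℕ} {l : List α} (h : ¬ i + 1 < l.length) : tauP i l = l := by
  rw [tauP, dif_neg h]

lemma tauP_of_comparable {i : ℕ} {l : List α} (h : i + 1 < l.length)
    (hc : l[i] ≤ l[i + 1] ∨ l[i + 1] ≤ l[i]) : tauP i l = l := by
  rw [tauP, dif_pos h, if_pos hc]

lemma tauP_of_incomparable {i : ℕ} {l : List α} (h : i + 1 < l.length)
    (hc : ¬ (l[i] ≤ l[i + 1] ∨ l[i + 1] ≤ l[i])) :
    tauP i l = (l.set i l[i + 1]).set (i + 1) l[i] := by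
  rw [tauP, dif_pos h, if_neg hc]

@[simp]
lemma length_tauP (i : ℕ) (l : List α) : (tauP i l).length = l.length := by
  unfold tauP; split_ifs <;> simp

lemma getElem_tauP_of_ne {i k : ℕ} (l : List α) (hk : k < l.length) (h₁ : k ≠ i)
    (h₂ : k ≠ i + 1) : (tauP i l)[k]'(by simpa using hk) = l[k] := by
  by_cases hi : i + 1 < l.length
  · by_cases hc : l[i] ≤ l[i + 1] ∨ l[i + 1] ≤ l[i]
    · simp only [tauP_of_comparable hi hc]
    · simp only [tauP_of_incomparable hi hc]
      rw [List.getElem_set_ne (Ne.symm h₂), List.getElem_set_ne (Ne.symm h₁)]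
  · simp only [tauP_of_length_le hi]

lemma tauP_set_of_ne {i k : ℕ} (x : α) (l : List α) (h₁ : k ≠ i) (h₂ : k ≠ i + 1) :
    tauP i (l.set k x) = (tauP i l).set k x := by
  by_cases hi : i + 1 < l.length
  · have hi' : i + 1 < (l.set k x).length := by simpa using hi
    have g₁ : (l.set k x)[i] = l[i] := List.getElem_set_ne h₁ _
    have g₂ : (l.set k x)[i + 1] = l[i + 1] := List.getElem_set_ne h₂ _
    by_cases hc : l[i] ≤ l[i + 1] ∨ l[i + 1] ≤ l[i]
    · rw [tauP_of_comparable hi hc, tauP_of_comparable hi' (by rwa [g₁, g₂])]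
    · rw [tauP_of_incomparable hi hc, tauP_of_incomparable hi' (by rwa [g₁, g₂]), g₁, g₂,
        List.set_comm _ _ h₁, List.set_comm _ _ h₂]
  · rw [tauP_of_length_le hi, tauP_of_length_le (by simpa using hi)]

lemma tauP_involutive (i : ℕ) : Involutive (tauP (α := α) i) := by
  intro l
  by_cases hi : i + 1 < l.length
  · by_cases hc : l[i] ≤ l[i + 1] ∨ l[i + 1] ≤ l[i]
    · rw [tauP_of_comparable hi hc, tauP_of_comparable hi hc]
    · set l' := (l.set i l[i + 1]).set (i + 1) l[i]
      have hi' : i + 1 < l'.length := by simpa [l'] using hi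
      have e₁ : l'[i] = l[i + 1] := by
        rw [List.getElem_set_ne (by omega), List.getElem_set_self]
      have e₂ : l'[i + 1] = l[i] := List.getElem_set_self _
      rw [tauP_of_incomparable hi hc, tauP_of_incomparable hi' (by rw [e₁, e₂]; tauto), e₁, e₂,
        List.set_comm _ _ (show i + 1 ≠ i by omega), List.set_set, List.set_set,
        List.set_getElem_self, List.set_getElem_self]
  · rw [tauP_of_length_le hi, tauP_of_length_le hi]

lemma tauP_commute {i j : ℕ} (hij : i + 2 ≤ j) :
    Function.Commute (tauP (α := α) i) (tauP j) := by
  intro l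
  by_cases hi : i + 1 < l.length
  · have hi' : i + 1 < (tauP j l).length := by simpa using hi
    have g₁ : (tauP j l)[i] = l[i] := getElem_tauP_of_ne l (by omega) (by omega) (by omega)
    have g₂ : (tauP j l)[i + 1] = l[i + 1] := getElem_tauP_of_ne l hi (by omega) (by omega)
    by_cases hc : l[i] ≤ l[i + 1] ∨ l[i + 1] ≤ l[i]
    · rw [tauP_of_comparable hi hc, tauP_of_comparable hi' (by rwa [g₁, g₂])]
    · rw [tauP_of_incomparable hi hc, tauP_of_incomparable hi' (by rwa [g₁, g₂]), g₁, g₂,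
        tauP_set_of_ne _ _ (by omega) (by omega), tauP_set_of_ne _ _ (by omega) (by omega)]
  · rw [tauP_of_length_le hi, tauP_of_length_le (by simpa using hi)]

end Tau

theorem stmt4_general {α : Type*} [PartialOrder α] (p : ℕ) (l : List α) :
    applyTau (evacIdx p) (applyTau (evacIdx p) l) = l := by
  rw [evacIdx_eq_evacWord, applyTau_eq_actWord, applyTau_eq_actWord]
  exact actWord_evacWord_involutive tauP_involutive (fun _ _ h => tauP_commute h) (p - 1) l

/-- For a finite poset `P` on `p` elements, the evacuation operator
`ε = (τ₁⋯τ_{p-1})(τ₁⋯τ_{p-2})⋯(τ₁τ₂)τ₁` on linear extensions of `P` is an involution. -/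
theorem stmt4 {α : Type*} [Fintype α] [PartialOrder α] (p : ℕ) (hp : p = Fintype.card α)
    (l : List α) (hl : IsLinExt l) :
    applyTau (evacIdx p) (applyTau (evacIdx p) l) = l :=
  stmt4_general p l
end

section
/- In a monoid M with elements τ₁,…,τ_{p-1} satisfying τᵢ² = 1 and τᵢτⱼ = τⱼτᵢ for |i-j| > 1, with δᵢ = τ₁τ₂⋯τᵢ and δᵢ* = τᵢτ_{i-1}⋯τ₁, for any u, v ∈ M and j ≥ 1 the following are equivalent: (i) u·δ₁*δ₃*⋯δ*_{2j-1} = v·δ₁*δ₃*⋯δ*_{2j-1}·δ_{2j-1}δ_{2j-2}⋯δ₂δ₁; (ii) u·τ₁τ₃⋯τ_{2j-1} = v. -/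
section Stmt7Aux

variable {M : Type*} [Monoid M]

/-- `δₙ = τ₁⋯τₙ` -/
def stmt7dd (τ : ℕ → M) (n : ℕ) : M := ((List.range' 1 n).map τ).prod
/-- `δₙ* = τₙ⋯τ₁` -/
def stmt7dds (τ : ℕ → M) (n : ℕ) : M := (((List.range' 1 n).reverse).map τ).prod
/-- `Pₙ = δₙ δₙ₋₁ ⋯ δ₁` -/
def stmt7PP (τ : ℕ → M) (n : ℕ) : M :=
  (((List.range n).reverse).map (fun k => stmt7dd τ (k + 1))).prod
/-- `D_j = δ₁* δ₃* ⋯ δ*_{2j-1}` -/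
def stmt7DD (τ : ℕ → M) (j : ℕ) : M :=
  ((List.range j).map (fun k => stmt7dds τ (2 * k + 1))).prod
/-- `T_j = τ₁ τ₃ ⋯ τ_{2j-1}` -/
def stmt7TT (τ : ℕ → M) (j : ℕ) : M := ((List.range j).map (fun k => τ (2 * k + 1))).prod

variable (τ : ℕ → M) (N : ℕ)

lemma stmt7dd_succ (n : ℕ) : stmt7dd τ (n + 1) = stmt7dd τ n * τ (n + 1) := by
  unfold stmt7dd
  rw [List.range'_concat]
  simp [Nat.add_comm]

lemma stmt7dds_succ (n : ℕ) : stmt7dds τ (n + 1) = τ (n + 1) * stmt7dds τ n := by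
  unfold stmt7dds
  rw [List.range'_concat]
  simp [Nat.add_comm]

lemma stmt7PP_succ (n : ℕ) : stmt7PP τ (n + 1) = stmt7dd τ (n + 1) * stmt7PP τ n := by
  unfold stmt7PP
  rw [List.range_succ]
  simp

lemma stmt7DD_succ (j : ℕ) : stmt7DD τ (j + 1) = stmt7DD τ j * stmt7dds τ (2 * j + 1) := by
  unfold stmt7DD
  rw [List.range_succ]
  simp

lemma stmt7TT_succ (j : ℕ) : stmt7TT τ (j + 1) = stmt7TT τ j * τ (2 * j + 1) := by
  unfold stmt7TT
  rw [List.range_succ]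
  simp

lemma stmt7dds_one : stmt7dds τ 1 = stmt7dd τ 1 := by
  simp [stmt7dds, stmt7dd]

variable (hsq : ∀ i, 1 ≤ i → i ≤ N → τ i * τ i = 1)
variable (hcomm : ∀ i k, 1 ≤ i → k ≤ N → i + 1 < k → τ i * τ k = τ k * τ i)

include hcomm in
lemma stmt7comm_dd (m n : ℕ) (hm : m ≤ N) (hn : n + 2 ≤ m) :
    Commute (τ m) (stmt7dd τ n) := by
  apply Commute.list_prod_right
  intro x hx
  simp only [List.mem_map, List.mem_range'_1] at hx
  obtain ⟨i, ⟨hi1, hi2⟩, rfl⟩ := hx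
  exact (hcomm i m hi1 hm (by omega)).symm

include hcomm in
lemma stmt7comm_dds (m n : ℕ) (hm : m ≤ N) (hn : n + 2 ≤ m) :
    Commute (τ m) (stmt7dds τ n) := by
  apply Commute.list_prod_right
  intro x hx
  simp only [List.mem_map, List.mem_reverse, List.mem_range'_1] at hx
  obtain ⟨i, ⟨hi1, hi2⟩, rfl⟩ := hx
  exact (hcomm i m hi1 hm (by omega)).symm

include hcomm in
lemma stmt7comm_PP (m n : ℕ) (hm : m ≤ N) (hn : n + 2 ≤ m) :
    Commute (τ m) (stmt7PP τ n) := by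
  apply Commute.list_prod_right
  intro x hx
  simp only [List.mem_map, List.mem_reverse, List.mem_range] at hx
  obtain ⟨k, hk, rfl⟩ := hx
  exact stmt7comm_dd τ N hcomm m (k + 1) hm (by omega)

include hcomm in
lemma stmt7comm_DD (j : ℕ) (hm : 2 * j + 1 ≤ N) :
    Commute (τ (2 * j + 1)) (stmt7DD τ j) := by
  apply Commute.list_prod_right
  intro x hx
  simp only [List.mem_map, List.mem_range] at hx
  obtain ⟨k, hk, rfl⟩ := hx
  exact stmt7comm_dds τ N hcomm _ _ hm (by omega)

include hcomm in
lemma stmt7comm_TT (j : ℕ) (hm : 2 * j + 1 ≤ N) :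
    Commute (τ (2 * j + 1)) (stmt7TT τ j) := by
  apply Commute.list_prod_right
  intro x hx
  simp only [List.mem_map, List.mem_range] at hx
  obtain ⟨k, hk, rfl⟩ := hx
  exact (hcomm _ _ (by omega) hm (by omega)).symm

include hsq in
lemma stmt7dds_mul_dd (n : ℕ) (hn : n ≤ N) : stmt7dds τ n * stmt7dd τ n = 1 := by
  induction n with
  | zero => simp [stmt7dds, stmt7dd]
  | succ m ih =>
    rw [stmt7dds_succ, stmt7dd_succ, mul_assoc, ← mul_assoc (stmt7dds τ m),
      ih (by omega), one_mul]
    exact hsq (m + 1) (by omega) hn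

omit hsq in
include hcomm in
/-- Key lemma L : `Pₙ δₙ₊₁* = δₙ₊₁ Pₙ`. -/
lemma stmt7L (n : ℕ) (hn : n + 1 ≤ N) :
    stmt7PP τ n * stmt7dds τ (n + 1) = stmt7dd τ (n + 1) * stmt7PP τ n := by
  induction n with
  | zero => simp [stmt7PP, stmt7dds_one]
  | succ m ih =>
    have hcm : τ (m + 2) * stmt7PP τ m = stmt7PP τ m * τ (m + 2) :=
      (stmt7comm_PP τ N hcomm (m + 2) m hn (by omega)).eq
    calc stmt7PP τ (m + 1) * stmt7dds τ (m + 1 + 1)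
        = stmt7dd τ (m + 1) * stmt7PP τ m * (τ (m + 2) * stmt7dds τ (m + 1)) := by
          rw [stmt7PP_succ, stmt7dds_succ]
      _ = stmt7dd τ (m + 1) * ((stmt7PP τ m * τ (m + 2)) * stmt7dds τ (m + 1)) := by
          simp only [mul_assoc]
      _ = stmt7dd τ (m + 1) * ((τ (m + 2) * stmt7PP τ m) * stmt7dds τ (m + 1)) := by
          rw [hcm]
      _ = (stmt7dd τ (m + 1) * τ (m + 2)) * (stmt7PP τ m * stmt7dds τ (m + 1)) := by
          simp only [mul_assoc]
      _ = stmt7dd τ (m + 1 + 1) * (stmt7dd τ (m + 1) * stmt7PP τ m) := by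
          rw [← stmt7dd_succ, ih (by omega)]
      _ = stmt7dd τ (m + 1 + 1) * stmt7PP τ (m + 1) := by rw [← stmt7PP_succ]

include hsq hcomm in
lemma stmt7PPds (j : ℕ) (h : 2 * j ≤ N) :
    stmt7PP τ (2 * j - 1) * stmt7dds τ (2 * j) = stmt7PP τ (2 * j) := by
  cases j with
  | zero => simp [stmt7PP, stmt7dds]
  | succ m =>
    have e1 : 2 * (m + 1) - 1 = 2 * m + 1 := by omega
    have e2 : 2 * (m + 1) = 2 * m + 1 + 1 := by omega
    rw [e1, e2, stmt7L τ N hcomm (2 * m + 1) (by omega), ← stmt7PP_succ]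

include hsq hcomm in
/-- Key identity K : `T_j D_j = D_j P_{2j-1}`. -/
lemma stmt7K (j : ℕ) (h : 2 * j ≤ N + 1) :
    stmt7TT τ j * stmt7DD τ j = stmt7DD τ j * stmt7PP τ (2 * j - 1) := by
  induction j with
  | zero => simp [stmt7TT, stmt7DD, stmt7PP]
  | succ m ih =>
    have hN : 2 * m + 1 ≤ N := by omega
    have hds : τ (2 * m + 1) * stmt7dds τ (2 * m + 1) = stmt7dds τ (2 * m) := by
      rw [stmt7dds_succ, ← mul_assoc, hsq (2 * m + 1) (by omega) hN, one_mul]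
    have hr : stmt7DD τ (m + 1) * stmt7PP τ (2 * (m + 1) - 1) =
        stmt7DD τ m * stmt7PP τ (2 * m) := by
      have e1 : 2 * (m + 1) - 1 = 2 * m + 1 := by omega
      rw [e1, stmt7DD_succ, stmt7PP_succ, mul_assoc, ← mul_assoc (stmt7dds τ (2 * m + 1)),
        stmt7dds_mul_dd τ N hsq (2 * m + 1) hN, one_mul]
    rw [hr]
    calc stmt7TT τ (m + 1) * stmt7DD τ (m + 1)
        = stmt7TT τ m * τ (2 * m + 1) * (stmt7DD τ m * stmt7dds τ (2 * m + 1)) := by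
          rw [stmt7TT_succ, stmt7DD_succ]
      _ = stmt7TT τ m * ((τ (2 * m + 1) * stmt7DD τ m) * stmt7dds τ (2 * m + 1)) := by
          simp only [mul_assoc]
      _ = stmt7TT τ m * ((stmt7DD τ m * τ (2 * m + 1)) * stmt7dds τ (2 * m + 1)) := by
          rw [(stmt7comm_DD τ N hcomm m hN).eq]
      _ = (stmt7TT τ m * stmt7DD τ m) * (τ (2 * m + 1) * stmt7dds τ (2 * m + 1)) := by
          simp only [mul_assoc]
      _ = (stmt7DD τ m * stmt7PP τ (2 * m - 1)) * stmt7dds τ (2 * m) := by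
          rw [ih (by omega), hds]
      _ = stmt7DD τ m * (stmt7PP τ (2 * m - 1) * stmt7dds τ (2 * m)) := by
          simp only [mul_assoc]
      _ = stmt7DD τ m * stmt7PP τ (2 * m) := by
          rw [stmt7PPds τ N hsq hcomm m (by omega)]

include hsq hcomm in
lemma stmt7Tsq (j : ℕ) (h : 2 * j ≤ N + 1) : stmt7TT τ j * stmt7TT τ j = 1 := by
  induction j with
  | zero => simp [stmt7TT]
  | succ m ih =>
    have hN : 2 * m + 1 ≤ N := by omega
    calc stmt7TT τ (m + 1) * stmt7TT τ (m + 1)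
        = stmt7TT τ m * ((τ (2 * m + 1) * stmt7TT τ m) * τ (2 * m + 1)) := by
          rw [stmt7TT_succ]; simp only [mul_assoc]
      _ = stmt7TT τ m * ((stmt7TT τ m * τ (2 * m + 1)) * τ (2 * m + 1)) := by
          rw [(stmt7comm_TT τ N hcomm m hN).eq]
      _ = (stmt7TT τ m * stmt7TT τ m) * (τ (2 * m + 1) * τ (2 * m + 1)) := by
          simp only [mul_assoc]
      _ = 1 := by rw [ih (by omega), hsq (2 * m + 1) (by omega) hN, one_mul]

include hsq in
lemma stmt7unit_DD (j : ℕ) (h : 2 * j ≤ N + 1) : IsUnit (stmt7DD τ j) := by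
  apply List.prod_isUnit
  intro x hx
  simp only [List.mem_map, List.mem_range] at hx
  obtain ⟨k, hk, rfl⟩ := hx
  apply List.prod_isUnit
  intro y hy
  simp only [List.mem_map, List.mem_reverse, List.mem_range'_1] at hy
  obtain ⟨i, ⟨hi1, hi2⟩, rfl⟩ := hy
  exact ⟨⟨τ i, τ i, hsq i hi1 (by omega), hsq i hi1 (by omega)⟩, rfl⟩

end Stmt7Aux

/-- In a monoid `M` with `τᵢ² = 1` and `τᵢτⱼ = τⱼτᵢ` for `|i-j| > 1`,
with `δᵢ = τ₁τ₂⋯τᵢ` and `δᵢ* = τᵢτ_{i-1}⋯τ₁`, for any `u, v ∈ M` and `j ≥ 1`: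
`u·δ₁*δ₃*⋯δ*_{2j-1} = v·δ₁*δ₃*⋯δ*_{2j-1}·δ_{2j-1}δ_{2j-2}⋯δ₂δ₁` iff
`u·τ₁τ₃⋯τ_{2j-1} = v`. -/
theorem stmt7 {M : Type*} [Monoid M] (p j : ℕ) (hj : 1 ≤ j) (hp : 2 * j ≤ p) (τ : ℕ → M)
    (hsq : ∀ i, 1 ≤ i → i ≤ p - 1 → τ i * τ i = 1)
    (hcomm : ∀ i k, 1 ≤ i → k ≤ p - 1 → i + 1 < k → τ i * τ k = τ k * τ i)
    (u v : M)
    (d ds : ℕ → M)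
    (hd : ∀ i, d i = ((List.range' 1 i).map τ).prod)
    (hds : ∀ i, ds i = (((List.range' 1 i).reverse).map τ).prod) :
    (u * ((List.range j).map (fun k => ds (2 * k + 1))).prod =
      v * ((List.range j).map (fun k => ds (2 * k + 1))).prod *
        (((List.range (2 * j - 1)).reverse).map (fun k => d (k + 1))).prod)
    ↔ u * ((List.range j).map (fun k => τ (2 * k + 1))).prod = v := by
  set N := p - 1 with hNdef
  have hN : 2 * j ≤ N + 1 := by omega
  have hDD : ((List.range j).map (fun k => ds (2 * k + 1))).prod = stmt7DD τ j := by
    simp only [hds]; rfl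
  have hPP : (((List.range (2 * j - 1)).reverse).map (fun k => d (k + 1))).prod =
      stmt7PP τ (2 * j - 1) := by
    simp only [hd]; rfl
  have hTT : ((List.range j).map (fun k => τ (2 * k + 1))).prod = stmt7TT τ j := rfl
  rw [hDD, hPP, hTT]
  have hK := stmt7K τ N hsq hcomm j hN
  have hT2 := stmt7Tsq τ N hsq hcomm j hN
  have hU := stmt7unit_DD τ N hsq j hN
  constructor
  · intro h
    have h2 : u = v * stmt7TT τ j := by
      apply hU.mul_right_cancel
      rw [h, mul_assoc, ← hK, ← mul_assoc]
    rw [h2, mul_assoc, hT2, mul_one]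
  · intro h
    have h2 : u = v * stmt7TT τ j := by
      rw [← h, mul_assoc, hT2, mul_one]
    rw [h2, mul_assoc v, hK, mul_assoc, ← mul_assoc]
end

section
/- Let A be an antichain of a finite poset P that intersects every maximal chain of P. Then e(P) = Σ_{t∈A} e(P − t), where e(Q) denotes the number of linear extensions of a poset Q. -/
/-- The number of linear extensions of a finite poset `α`. -/
noncomputable def linExtCount (α : Type*) [PartialOrder α] [Fintype α] : ℕ :=
  Nat.card {f : α ≃ Fin (Fintype.card α) // ∀ a b : α, a < b → f a < f b}

/-!
Induction on `P`. Sorting linear extensions by their first element gives `e(P) = ∑ e(P - m)`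
over the minimal elements `m`. If `m ∉ A`, then `A` is still an antichain meeting every maximal
chain of `P - m`; if `m ∈ A`, so is `A - m` together with the new minimal elements of `P - m`.
Expanding each `e(P - m)` by induction, and each `e(P - t)`, `t ∈ A`, by its first element, turns
both sides into the same sum of `e(P - m - t)` over minimal `m` and `t ∈ A` with `m ≠ t`, plus the
same terms for the new minimal elements.
-/

open Finset

theorem card_strictMono_equiv_congr {α β L M : Type*} [Preorder α] [Preorder β] [Preorder L]
    [Preorder M] (e : α ≃o β) (ψ : L ≃o M) :
    Nat.card {f : α ≃ L // ∀ a b, a < b → f a < f b} =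
      Nat.card {f : β ≃ M // ∀ a b, a < b → f a < f b} := by
  refine Nat.card_congr <| (e.toEquiv.equivCongr ψ.toEquiv).subtypeEquiv fun f => ⟨?_, ?_⟩
  · intro hf a b hab
    exact ψ.strictMono (hf _ _ (e.symm.strictMono hab))
  · intro hf a b hab
    simpa using ψ.symm.strictMono (hf (e a) (e b) (e.strictMono hab))

theorem card_strictMono_equiv_eq_linExtCount {α L : Type*} [PartialOrder α] [Fintype α]
    [LinearOrder L] [Fintype L] (h : Fintype.card L = Fintype.card α) :
    Nat.card {f : α ≃ L // ∀ a b, a < b → f a < f b} = linExtCount α :=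
  card_strictMono_equiv_congr (OrderIso.refl α) (Fintype.orderIsoFinOfCardEq L h).symm

theorem linExtCount_congr {α β : Type*} [PartialOrder α] [Fintype α] [PartialOrder β]
    [Fintype β] (e : α ≃o β) : linExtCount α = linExtCount β :=
  (card_strictMono_equiv_congr e (OrderIso.refl _)).trans <|
    card_strictMono_equiv_eq_linExtCount <| by simp [Fintype.card_congr e.toEquiv]

def restrictComplEquiv {β L : Type*} [DecidableEq β] [DecidableEq L] (m : β) (l : L) :
    {f : β ≃ L // f m = l} ≃ ({x // x ≠ m} ≃ {y // y ≠ l}) :=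
  (((Equiv.optionSubtypeNe m).equivCongr (Equiv.refl L)).symm.subtypeEquiv
    fun _ => Iff.rfl).trans (Equiv.optionSubtype l)

theorem card_strictMono_equiv_fiber_bot {β L : Type*} [PartialOrder β] [DecidableEq β]
    [LinearOrder L] [OrderBot L] {m : β} (hm : IsMin m) :
    Nat.card {f : {f : β ≃ L // ∀ a b, a < b → f a < f b} // f.1.symm ⊥ = m} =
      Nat.card {g : {x // x ≠ m} ≃ {y : L // y ≠ ⊥} // ∀ a b, a < b → g a < g b} := by
  let SM (f : β ≃ L) : Prop := ∀ a b, a < b → f a < f b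
  refine Nat.card_congr <| (Equiv.subtypeSubtypeEquivSubtypeInter SM (·.symm ⊥ = m)).trans <|
    (Equiv.subtypeEquivRight fun f => ?_).trans <|
    (Equiv.subtypeSubtypeEquivSubtypeInter (· m = ⊥) SM).symm.trans <|
    (restrictComplEquiv m ⊥).subtypeEquiv fun f => ⟨?_, ?_⟩
  · rw [Equiv.symm_apply_eq, eq_comm, and_comm]
  · exact fun hf a b hab => hf a b hab
  · intro hg a b hab
    have hbm : b ≠ m := fun h => hm.not_lt (h ▸ hab)
    by_cases ham : a = m
    · obtain ⟨f, hfm⟩ := f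
      change f a < f b
      rw [ham, hfm, bot_lt_iff_ne_bot, ← hfm]
      exact f.injective.ne hbm
    · exact hg ⟨a, ham⟩ ⟨b, hbm⟩ hab

open scoped Classical in
theorem linExtCount_eq_sum_isMin (β : Type*) [PartialOrder β] [Fintype β] [DecidableEq β]
    [Nonempty β] :
    linExtCount β = ∑ m : β with IsMin m, linExtCount {x // x ≠ m} := by
  have : NeZero (Fintype.card β) := ⟨Fintype.card_ne_zero⟩
  let S := {f : β ≃ Fin (Fintype.card β) // ∀ a b, a < b → f a < f b}
  calc linExtCount β = Nat.card (Σ m, {f : S // f.1.symm ⊥ = m}) :=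
        (Nat.card_congr (Equiv.sigmaFiberEquiv _)).symm
    _ = ∑ m, Nat.card {f : S // f.1.symm ⊥ = m} := Nat.card_sigma
    _ = ∑ m, if IsMin m then linExtCount {x // x ≠ m} else 0 := sum_congr rfl fun m _ => ?_
    _ = _ := (sum_filter _ _).symm
  split_ifs with hm
  · rw [card_strictMono_equiv_fiber_bot hm, card_strictMono_equiv_eq_linExtCount]
    simp [Fintype.card_subtype_compl]
  · obtain ⟨b, hb⟩ := not_isMin_iff.1 hm
    refine Nat.card_eq_zero.2 (Or.inl ⟨fun ⟨f, hfm⟩ => not_lt_bot (a := f.1 b) ?_⟩)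
    simpa [← hfm] using f.2 b m hb

section Chains

variable {α : Type*} [PartialOrder α]

def IsMaxChainIn (s c : Set α) : Prop :=
  Maximal (fun d : Set α => IsChain (· ≤ ·) d ∧ d ⊆ s) c

def IsCutset (s A : Set α) : Prop :=
  ∀ c, IsMaxChainIn s c → (A ∩ c).Nonempty

theorem exists_isMaxChainIn {s : Set α} (hs : s.Finite) : ∃ c, IsMaxChainIn s c :=
  (hs.finite_subsets.subset fun _ hd => hd.2).exists_maximal
    ⟨∅, IsChain.empty, Set.empty_subset s⟩

theorem IsCutset.nonempty {s A : Set α} (h : IsCutset s A) (hs : s.Finite) : A.Nonempty :=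
  let ⟨_, hc⟩ := exists_isMaxChainIn hs
  (h _ hc).mono Set.inter_subset_left

theorem IsMaxChainIn.nonempty {s c : Set α} (hc : IsMaxChainIn s c) (hs : s.Nonempty) :
    c.Nonempty := by
  obtain ⟨x, hx⟩ := hs
  by_contra h
  rw [Set.not_nonempty_iff_eq_empty] at h
  subst h
  exact hc.2 ⟨IsChain.singleton, Set.singleton_subset_iff.2 hx⟩ (Set.empty_subset _) rfl

theorem IsMaxChainIn.of_sdiff_singleton {s c : Set α} {a : α} (ha : a ∈ s)
    (hc : IsMaxChainIn (s \ {a}) c) :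
    IsMaxChainIn s c ∨ (∀ y ∈ c, a ≤ y ∨ y ≤ a) ∧ IsMaxChainIn s (insert a c) := by
  have hcs : c ⊆ s := hc.1.2.trans Set.sdiff_subset
  have hsub : ∀ d, IsChain (· ≤ ·) d ∧ d ⊆ s → c ⊆ d → d \ {a} ⊆ c := fun d hd hcd =>
    hc.2 ⟨hd.1.mono Set.sdiff_subset, Set.sdiff_subset_sdiff_left hd.2⟩
      (Set.subset_sdiff_singleton hcd fun hac => (hc.1.2 hac).2 rfl)
  by_cases hcomp : ∀ y ∈ c, a ≤ y ∨ y ≤ a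
  · refine Or.inr ⟨hcomp, ⟨hc.1.1.insert fun y hy _ => hcomp y hy, Set.insert_subset ha hcs⟩,
      fun d hd hcd => ?_⟩
    exact Set.sdiff_singleton_subset_iff.1 (hsub d hd ((Set.subset_insert a c).trans hcd))
  · push Not at hcomp
    obtain ⟨y, hyc, hay, hya⟩ := hcomp
    refine Or.inl ⟨⟨hc.1.1, hcs⟩, fun d hd hcd => ?_⟩
    have had : a ∉ d := fun had => (hd.1.total had (hcd hyc)).elim hay hya
    simpa [Set.sdiff_singleton_eq_self had] using hsub d hd hcd

theorem IsCutset.sdiff_singleton {s A : Set α} {a : α} (h : IsCutset s A) (ha : a ∈ s)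
    (haA : a ∉ A) : IsCutset (s \ {a}) A := by
  intro c hc
  rcases hc.of_sdiff_singleton ha with hc' | ⟨-, hc'⟩
  · exact h c hc'
  · obtain ⟨x, hxA, hxc⟩ := h _ hc'
    rcases hxc with rfl | hxc
    · exact absurd hxA haA
    · exact ⟨x, hxA, hxc⟩

end Chains

section Finsets

open scoped Classical

variable {α : Type*} [PartialOrder α]

noncomputable def minElems (s : Finset α) : Finset α := {m ∈ s | Minimal (· ∈ s) m}

noncomputable def newMinElems (s : Finset α) (a : α) : Finset α :=
  {x ∈ s | a < x ∧ ∀ b ∈ s, b < x → b = a}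

theorem mem_minElems {s : Finset α} {m : α} :
    m ∈ minElems s ↔ m ∈ s ∧ ∀ b ∈ s, ¬b < m := by
  simp only [minElems, mem_filter, minimal_iff_forall_lt]
  exact ⟨fun h => ⟨h.1, fun b hb hbm => h.2.2 hbm hb⟩,
    fun h => ⟨h.1, h.1, fun b hbm hb => h.2 b hb hbm⟩⟩

def eraseOrderIso (s : Finset α) (m : s) : {y : s // y ≠ m} ≃o s.erase m.1 where
  toFun y := ⟨y.1.1, mem_erase.2 ⟨fun h => y.2 (Subtype.ext h), y.1.2⟩⟩
  invFun x := ⟨⟨x.1, mem_of_mem_erase x.2⟩, fun h => ne_of_mem_erase x.2 (congrArg Subtype.val h)⟩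
  left_inv _ := rfl
  right_inv _ := rfl
  map_rel_iff' := Iff.rfl

theorem linExtCount_eq_sum_minElems {s : Finset α} (hs : s.Nonempty) :
    linExtCount s = ∑ m ∈ minElems s, linExtCount (s.erase m) := by
  have : Nonempty s := hs.to_subtype
  rw [linExtCount_eq_sum_isMin]
  refine sum_bij (fun m _ => m.1) (fun m hm => ?_) (fun _ _ _ _ => Subtype.ext)
    (fun x hx => ?_) (fun m _ => linExtCount_congr (eraseOrderIso s m))
  · exact mem_filter.2 ⟨m.2, minimal_true_subtype.1 (minimal_true.2 (mem_filter.1 hm).2)⟩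
  · exact ⟨⟨x, (mem_filter.1 hx).1⟩,
      mem_filter.2 ⟨mem_univ _, minimal_true.1 (minimal_true_subtype.2 (mem_filter.1 hx).2)⟩, rfl⟩

theorem minElems_erase (s : Finset α) (t : α) :
    minElems (s.erase t) = (minElems s).erase t ∪ newMinElems s t := by
  ext x
  simp only [mem_union, mem_erase, mem_minElems, newMinElems, mem_filter]
  constructor
  · rintro ⟨⟨hxt, hxs⟩, hmin⟩
    by_cases htx : t < x
    · exact Or.inr ⟨hxs, htx, fun b hb hbx => by_contra fun hbt => hmin b ⟨hbt, hb⟩ hbx⟩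
    · refine Or.inl ⟨hxt, hxs, fun b hb hbx => ?_⟩
      by_cases hbt : b = t
      · exact htx (hbt ▸ hbx)
      · exact hmin b ⟨hbt, hb⟩ hbx
  · rintro (⟨hxt, hxs, hmin⟩ | ⟨hxs, htx, hN⟩)
    · exact ⟨⟨hxt, hxs⟩, fun b hb => hmin b hb.2⟩
    · exact ⟨⟨htx.ne', hxs⟩, fun b hb hbx => hb.1 (hN b hb.2 hbx)⟩

theorem disjoint_erase_minElems_newMinElems {s : Finset α} {t : α} (ht : t ∈ s) :
    Disjoint ((minElems s).erase t) (newMinElems s t) :=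
  disjoint_left.2 fun _ hx hxN =>
    (mem_minElems.1 (mem_of_mem_erase hx)).2 t ht (mem_filter.1 hxN).2.1

theorem newMinElems_eq_empty {s : Finset α} {t : α} (ht : t ∈ s) (htm : t ∉ minElems s) :
    newMinElems s t = ∅ := by
  obtain ⟨u, hus, hut⟩ : ∃ u ∈ s, u < t := by simpa [mem_minElems, ht] using htm
  refine eq_empty_of_forall_notMem fun x hx => ?_
  obtain ⟨-, htx, hN⟩ := mem_filter.1 hx
  exact hut.ne (hN u hus (hut.trans htx))

theorem newMinElems_subset_erase (s : Finset α) (t : α) : newMinElems s t ⊆ s.erase t :=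
  fun _ hx => mem_erase.2 ⟨(mem_filter.1 hx).2.1.ne', (mem_filter.1 hx).1⟩

theorem linExtCount_erase_eq_sum {s : Finset α} {t : α} (ht : t ∈ s) (hne : (s.erase t).Nonempty) :
    linExtCount (s.erase t) = ∑ u ∈ (minElems s).erase t, linExtCount ((s.erase t).erase u) +
      ∑ u ∈ newMinElems s t, linExtCount ((s.erase t).erase u) := by
  rw [linExtCount_eq_sum_minElems hne, minElems_erase,
    sum_union (disjoint_erase_minElems_newMinElems ht)]

theorem disjoint_erase_newMinElems {s A : Finset α} {a : α} (hA : IsAntichain (· ≤ ·) (A : Set α))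
    (haA : a ∈ A) : Disjoint (A.erase a) (newMinElems s a) :=
  disjoint_left.2 fun _ hx hxN =>
    have hax := (mem_filter.1 hxN).2.1
    hA haA (mem_of_mem_erase hx) hax.ne hax.le

theorem IsAntichain.erase_union_newMinElems {s A : Finset α} {a : α}
    (hA : IsAntichain (· ≤ ·) (A : Set α)) (hAs : A ⊆ s) (haA : a ∈ A) :
    IsAntichain (· ≤ ·) ((A.erase a ∪ newMinElems s a : Finset α) : Set α) := by
  intro x hx y hy hxy hle
  rw [coe_union, Set.mem_union, mem_coe, mem_coe] at hx hy
  have hlt := lt_of_le_of_ne hle hxy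
  rcases hx with hx | hx <;> rcases hy with hy | hy
  · exact hA (mem_of_mem_erase hx) (mem_of_mem_erase hy) hxy hle
  · exact ne_of_mem_erase hx ((mem_filter.1 hy).2.2 x (hAs (mem_of_mem_erase hx)) hlt)
  · have hay := (mem_filter.1 hx).2.1.trans_le hle
    exact hA haA (mem_of_mem_erase hy) hay.ne hay.le
  · have hxa := (mem_filter.1 hy).2.2 x (mem_filter.1 hx).1 hlt
    exact (mem_filter.1 hx).2.1.ne' hxa

theorem IsCutset.erase_union_newMinElems {s A : Finset α} {a : α}
    (h : IsCutset (s : Set α) A) (ha : a ∈ minElems s) (hne : (s.erase a).Nonempty) :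
    IsCutset (s.erase a : Set α) (A.erase a ∪ newMinElems s a : Finset α) := by
  intro c hc
  rw [coe_erase] at hc
  obtain ⟨has, hamin⟩ := mem_minElems.1 ha
  rcases hc.of_sdiff_singleton has with hc' | ⟨hcomp, -⟩
  · obtain ⟨x, hxA, hxc⟩ := h c hc'
    exact ⟨x, mem_union_left _ (mem_erase.2 ⟨(hc.1.2 hxc).2, hxA⟩), hxc⟩
  · obtain ⟨x, hxmin⟩ := (s.finite_toSet.subset (hc.1.2.trans Set.sdiff_subset)).exists_minimal
      (hc.nonempty (by rw [← coe_erase]; exact coe_nonempty.2 hne))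
    have hxs : x ∈ (s : Set α) \ {a} := hc.1.2 hxmin.1
    have hxle : ∀ y ∈ c, x ≤ y := fun y hy =>
      (hc.1.1.total hxmin.1 hy).elim id (hxmin.2 hy)
    have hax : a < x := (hcomp x hxmin.1).elim (fun h => lt_of_le_of_ne h (Ne.symm hxs.2))
      fun h => absurd (lt_of_le_of_ne h hxs.2) (hamin x hxs.1)
    refine ⟨x, mem_union_right _ (mem_filter.2 ⟨hxs.1, hax, fun b hb hbx => ?_⟩), hxmin.1⟩
    by_contra hba
    have hbc : b ∈ c := hc.2 ⟨hc.1.1.insert fun y hy _ => Or.inl (hbx.le.trans (hxle y hy)),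
      Set.insert_subset ⟨hb, hba⟩ hc.1.2⟩ (Set.subset_insert b c) (Set.mem_insert b c)
    exact hbx.not_ge (hxmin.2 hbc hbx.le)

theorem linExtCount_eq_sum_of_isCutset {s A : Finset α} (hAs : A ⊆ s)
    (hA : IsAntichain (· ≤ ·) (A : Set α)) (hcut : IsCutset (s : Set α) A) :
    linExtCount s = ∑ t ∈ A, linExtCount (s.erase t) := by
  induction s using Finset.strongInduction generalizing A with | H s ih => ?_
  have hAne : A.Nonempty := coe_nonempty.1 (hcut.nonempty s.finite_toSet)
  rcases (hAne.mono hAs).exists_eq_singleton_or_nontrivial with ⟨x, rfl⟩ | hs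
  · obtain rfl : A = {x} := (subset_singleton_iff.1 hAs).resolve_left hAne.ne_empty
    have hmin : minElems {x} = {x} := by ext; simp +contextual [mem_minElems]
    rw [linExtCount_eq_sum_minElems (singleton_nonempty x), hmin]
  set M := minElems s
  let X (t : α) := ∑ u ∈ newMinElems s t, linExtCount ((s.erase t).erase u)
  have hstep (m : α) (hm : m ∈ M) : linExtCount (s.erase m) =
      ∑ t ∈ A.erase m, linExtCount ((s.erase m).erase t) + if m ∈ A then X m else 0 := by
    have hms := (mem_minElems.1 hm).1
    split_ifs with hmA
    · rw [← sum_union (disjoint_erase_newMinElems hA hmA)]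
      exact ih _ (erase_ssubset hms)
        (union_subset (erase_subset_erase m hAs) (newMinElems_subset_erase s m))
        (hA.erase_union_newMinElems hAs hmA) (hcut.erase_union_newMinElems hm hs.erase_nonempty)
    · rw [erase_eq_of_notMem hmA, add_zero]
      exact ih _ (erase_ssubset hms) (subset_erase.2 ⟨hAs, hmA⟩) hA
        (by rw [coe_erase]; exact hcut.sdiff_singleton hms hmA)
  calc linExtCount s = ∑ m ∈ M, linExtCount (s.erase m) := linExtCount_eq_sum_minElems hs.nonempty
    _ = ∑ m ∈ M, ∑ t ∈ A.erase m, linExtCount ((s.erase m).erase t) + ∑ t ∈ M ∩ A, X t := by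
      rw [sum_congr rfl hstep, sum_add_distrib, sum_ite_mem]
    _ = ∑ t ∈ A, ∑ m ∈ M.erase t, linExtCount ((s.erase t).erase m) + ∑ t ∈ A, X t := by
      congr 1
      · rw [sum_comm' (t' := A) (s' := M.erase) fun m t => by simp only [mem_erase]; tauto]
        exact sum_congr rfl fun t _ => sum_congr rfl fun m _ => by rw [erase_right_comm]
      · rw [inter_comm]
        exact sum_subset inter_subset_left fun t ht htM => by
          simp [X, newMinElems_eq_empty (hAs ht) fun h => htM (mem_inter.2 ⟨ht, h⟩)]
    _ = ∑ t ∈ A, linExtCount (s.erase t) := by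
      rw [← sum_add_distrib]
      exact sum_congr rfl fun t ht => (linExtCount_erase_eq_sum (hAs ht) hs.erase_nonempty).symm

end Finsets

open scoped Classical in
/-- Let `A` be an antichain of the finite poset `P` that intersects every
maximal chain of `P`.  Then `e(P) = Σ_{t ∈ A} e(P − t)`. -/
theorem stmt11 {P : Type*} [Fintype P] [PartialOrder P] (A : Finset P)
    (hA : IsAntichain (· ≤ ·) (A : Set P))
    (hmeet : ∀ c : Set P, IsMaxChain (· ≤ ·) c → ((A : Set P) ∩ c).Nonempty) :
    linExtCount P = ∑ t ∈ A, linExtCount {x : P // x ≠ t} := by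
  have hcut : IsCutset ((univ : Finset P) : Set P) A := fun c hc =>
    hmeet c ⟨hc.1.1, fun d hd hcd => hcd.antisymm (hc.2 ⟨hd, by simp⟩ hcd)⟩
  calc linExtCount P = linExtCount (univ : Finset P) :=
        linExtCount_congr { (Equiv.subtypeUnivEquiv mem_univ).symm with map_rel_iff' := Iff.rfl }
    _ = ∑ t ∈ A, linExtCount (univ.erase t) :=
        linExtCount_eq_sum_of_isCutset (subset_univ A) hA hcut
    _ = ∑ t ∈ A, linExtCount {x : P // x ≠ t} := sum_congr rfl fun t _ => linExtCount_congr
        { Equiv.subtypeEquivRight fun x => by simp with map_rel_iff' := Iff.rfl }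
end

section
/- Let P be a finite graded poset and K a field of characteristic 0. For a maximal chain 𝔪 and 1 ≤ i ≤ n−1, let N_i(𝔪) be the set of maximal chains differing from 𝔪 exactly at rank i, and let q = #N_i(𝔪). Define τᵢ(𝔪) = (1/(q+1))((q−1)𝔪 − 2 Σ_{𝔪'∈N_i(𝔪)} 𝔪') when q ≥ 1, and τᵢ(𝔪) = 𝔪 when q = 0. Then τᵢ² is the identity on the vector space K𝓜(P) spanned by the maximal chains. -/
open scoped Classical

/-- The maximal chains `0̂ = t₀ ⋖ t₁ ⋖ ⋯ ⋖ t_n = 1̂` of a graded poset `α` of rank `n`. -/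
def MChain (α : Type*) [PartialOrder α] [BoundedOrder α] (n : ℕ) : Type _ :=
  {t : Fin (n + 1) → α // t 0 = ⊥ ∧ t (Fin.last n) = ⊤ ∧
    ∀ i : Fin n, t i.castSucc ⋖ t i.succ}

noncomputable instance {α : Type*} [Fintype α] [PartialOrder α] [BoundedOrder α] (n : ℕ) :
    Fintype (MChain α n) := by unfold MChain; infer_instance

/-- `N i 𝔪`: the set of maximal chains differing from `𝔪` exactly at the rank-`i`
element. -/
noncomputable def Nset {α : Type*} [Fintype α] [PartialOrder α] [BoundedOrder α] {n : ℕ}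
    (i : Fin (n + 1)) (m : MChain α n) : Finset (MChain α n) :=
  Finset.univ.filter (fun m' => m' ≠ m ∧ ∀ j : Fin (n + 1), j ≠ i → m'.1 j = m.1 j)

/-- The image of the basis vector `𝔪` under `τᵢ`:
`τᵢ(𝔪) = (1/(q+1))((q−1)𝔪 − 2 Σ_{𝔪' ∈ N_i(𝔪)} 𝔪')` where `q = #N_i(𝔪) ≥ 1`, and
`τᵢ(𝔪) = 𝔪` when `q = 0`. -/
noncomputable def tauChain (K : Type*) [Field K] [CharZero K] {α : Type*} [Fintype α]
    [PartialOrder α] [BoundedOrder α] {n : ℕ} (i : Fin (n + 1)) (m : MChain α n) :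
    MChain α n →₀ K :=
  if (Nset i m).card = 0 then Finsupp.single m 1
  else (((Nset i m).card - 1 : K) / ((Nset i m).card + 1 : K)) • Finsupp.single m 1
    - ((2 : K) / ((Nset i m).card + 1 : K)) • ∑ m' ∈ Nset i m, Finsupp.single m' (1 : K)

/-- The linear operator `τᵢ` on the vector space `K𝓜(P)` spanned by the maximal
chains, extending `tauChain` linearly. -/
noncomputable def tauOp (K : Type*) [Field K] [CharZero K] {α : Type*} [Fintype α]
    [PartialOrder α] [BoundedOrder α] {n : ℕ} (i : Fin (n + 1)) :
    (MChain α n →₀ K) →ₗ[K] (MChain α n →₀ K) :=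
  Finsupp.linearCombination K (tauChain K i)

lemma notMem_Nset_self {α : Type*} [Fintype α] [PartialOrder α] [BoundedOrder α] {n : ℕ}
    (i : Fin (n + 1)) (m : MChain α n) : m ∉ Nset i m := by
  simp [Nset]

lemma Nset_swap {α : Type*} [Fintype α] [PartialOrder α] [BoundedOrder α] {n : ℕ}
    {i : Fin (n + 1)} {m m' : MChain α n} (h : m' ∈ Nset i m) :
    Nset i m' = insert m ((Nset i m).erase m') := by
  obtain ⟨-, hne, hag⟩ := Finset.mem_filter.mp h
  ext x
  simp only [Nset, Finset.mem_insert, Finset.mem_erase, Finset.mem_filter, Finset.mem_univ,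
    true_and]
  constructor
  · rintro ⟨hxm', hx⟩
    by_cases hxm : x = m
    · exact Or.inl hxm
    · exact Or.inr ⟨hxm', hxm, fun j hj => (hx j hj).trans (hag j hj)⟩
  · rintro (rfl | ⟨hxm', hxm, hx⟩)
    · exact ⟨fun h' => hne h'.symm, fun j hj => (hag j hj).symm⟩
    · exact ⟨hxm', fun j hj => (hx j hj).trans (hag j hj).symm⟩

lemma Nset_swap_card {α : Type*} [Fintype α] [PartialOrder α] [BoundedOrder α] {n : ℕ}
    {i : Fin (n + 1)} {m m' : MChain α n} (h : m' ∈ Nset i m) :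
    (Nset i m').card = (Nset i m).card := by
  rw [Nset_swap h, Finset.card_insert_of_notMem
    (fun hx => notMem_Nset_self i m (Finset.mem_of_mem_erase hx)),
    Finset.card_erase_of_mem h]
  have : 1 ≤ (Nset i m).card := Finset.card_pos.mpr ⟨m', h⟩
  omega

lemma key_lemma (K : Type*) [Field K] [CharZero K] {α : Type*} [Fintype α]
    [PartialOrder α] [BoundedOrder α] {n : ℕ} (i : Fin (n + 1)) (m : MChain α n) :
    Finsupp.linearCombination K (tauChain K i) (tauChain K i m) = Finsupp.single m 1 := by
  by_cases hq : (Nset i m).card = 0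
  · rw [tauChain, if_pos hq, Finsupp.linearCombination_single, one_smul, tauChain, if_pos hq]
  · set N := Nset i m with hN
    set q : ℕ := N.card with hqdef
    have hq1 : 1 ≤ q := Nat.one_le_iff_ne_zero.mpr hq
    have hqK : ((q : K) + 1) ≠ 0 := Nat.cast_add_one_ne_zero q
    set S : MChain α n →₀ K := ∑ m' ∈ N, Finsupp.single m' (1 : K) with hS
    have hsum : ∀ m' ∈ N, tauChain K i m' =
        (((q : K) - 1) / ((q : K) + 1)) • Finsupp.single m' 1
          - ((2 : K) / ((q : K) + 1)) • (Finsupp.single m 1 + S - Finsupp.single m' 1) := by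
      intro m' hm'
      have hc : (Nset i m').card = q := Nset_swap_card hm'
      rw [tauChain, hc, if_neg hq, Nset_swap hm', Finset.sum_insert
        (fun hx => notMem_Nset_self i m (Finset.mem_of_mem_erase hx)),
        Finset.sum_erase_eq_sub hm']
      ring_nf
      rw [add_sub_assoc]
    rw [tauChain, if_neg hq, ← hN, ← hqdef, ← hS, map_sub, map_smul, map_smul,
      Finsupp.linearCombination_single, one_smul, hS, map_sum]
    have : ∀ m' ∈ N, Finsupp.linearCombination K (tauChain K i) (Finsupp.single m' (1:K))
        = tauChain K i m' := fun m' _ => by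
      rw [Finsupp.linearCombination_single, one_smul]
    have htm : tauChain K i m = (((q : K) - 1) / ((q : K) + 1)) • Finsupp.single m 1
        - ((2 : K) / ((q : K) + 1)) • S := by
      rw [tauChain, if_neg hq]
    simp only [Finset.sum_congr rfl this, Finset.sum_congr rfl hsum, Finset.sum_sub_distrib,
      ← Finset.smul_sum, htm, ← hS]
    rw [Finset.sum_const, ← Nat.cast_smul_eq_nsmul K]
    match_scalars <;> field_simp <;> ring

/-- For a finite graded poset `P` of rank `n` (with `0̂` and `1̂`) and a
field `K` of characteristic `0`, the operators `τᵢ` (`1 ≤ i ≤ n−1`) on the vector space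
`K𝓜(P)` spanned by the maximal chains satisfy `τᵢ² = id`. -/
theorem stmt13 (K : Type*) [Field K] [CharZero K] (α : Type*) [Fintype α] [PartialOrder α]
    [BoundedOrder α] (n : ℕ)
    (hgraded : ∀ c : Set α, IsMaxChain (· ≤ ·) c → c.ncard = n + 1)
    (i : Fin (n + 1)) (hi1 : 1 ≤ (i : ℕ)) (hi2 : (i : ℕ) ≤ n - 1) :
    (tauOp K (α := α) i).comp (tauOp K i) = LinearMap.id := by
  apply Finsupp.lhom_ext
  intro m b
  simp only [LinearMap.comp_apply, LinearMap.id_apply, tauOp,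
    Finsupp.linearCombination_single, map_smul, key_lemma K i m, Finsupp.smul_single,
    smul_eq_mul, mul_one]
end

section
/- Let w ∈ S_n, let w₀ be the longest permutation, and let k be the maximal length of a subsequence (b₁,…,b_k) of a fixed reduced decomposition (a₁,…,a_{C(n,2)}) of w₀ such that s_{b₁}⋯s_{b_k} = w. Then k = C(n,2) − n + κ(w₀w), where κ denotes the number of cycles. -/
/-!
Multiplying a permutation `f` by a transposition `swap p q` changes its number of cycles by
exactly one: by at most one, because the cycles of `f` and of `swap p q * f` both refine the
cycles of `f` with those of `p` and `q` merged (the orbits of the group generated by `f` and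
`swap p q`); by exactly one, because `sign f = (-1) ^ (n - κ f)`. It goes up when `p` and `q` lie
in the same cycle of `f`.

Deleting a letter from a word multiplies its product by a conjugate of a transposition, so a
subword of `a` with product `w` has at least `n - κ (w₀⁻¹ w)` letters fewer than `a`.
Conversely, peel off `x = w₀ w` one transposition `t = swap p q` at a time, with `p < q`,
`x q < x p`, and `p`, `q` in one cycle of `x`, so that `κ (x t) = κ x + 1`. As `w₀` reverses the
order, `w₀ x t` has a descent at `(p, q)`, and the strong exchange property deletes one letter
from a subword with product `w₀ x t` to reach one with product `w₀ x`.
-/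

/-- The adjacent transposition `s_{i+1} = (i+1, i+2)` of `Fin n` (0-based `i`). -/
def sgen (n i : ℕ) : Equiv.Perm (Fin n) :=
  if h : i + 1 < n then Equiv.swap ⟨i, Nat.lt_of_succ_lt h⟩ ⟨i + 1, h⟩ else 1

/-- The number of cycles of a permutation, counting fixed points. -/
def kappa {n : ℕ} (u : Equiv.Perm (Fin n)) : ℕ :=
  u.cycleType.card + (n - u.support.card)

open Equiv Equiv.Perm

namespace Setoid

variable {α : Type*} [Finite α] {r s : Setoid α}

theorem nat_card_quotient_le_of_le (h : r ≤ s) :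
    Nat.card (Quotient s) ≤ Nat.card (Quotient r) :=
  Nat.card_le_card_of_surjective (Quotient.map' id h) fun c =>
    c.inductionOn fun x => ⟨⟦x⟧, rfl⟩

theorem nat_card_quotient_le_add_one (h : r ≤ s) (a : α)
    (hs : ∀ x y, s x y → r x y ∨ r x a ∨ r y a) :
    Nat.card (Quotient r) ≤ Nat.card (Quotient s) + 1 := by
  have hinj : Set.InjOn (Quotient.map' id h) {⟦a⟧}ᶜ := by
    rintro ⟨x⟩ hx ⟨y⟩ hy hxy
    rcases hs x y (Quotient.exact hxy) with hr | hr | hr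
    · exact Quotient.sound hr
    · exact absurd (Quotient.sound hr) hx
    · exact absurd (Quotient.sound hr) hy
  have := Set.ncard_le_ncard_of_injOn _ (fun _ _ => Set.mem_univ _) hinj
  rw [Set.ncard_univ, Set.ncard_compl, Set.ncard_singleton] at this
  omega

end Setoid

namespace Equiv.Perm

variable {α : Type*}

theorem SameCycle.rel_of_forall_rel_apply {f : Perm α} {r : Setoid α}
    (hr : ∀ z, r z (f z)) {x y : α} (h : f.SameCycle x y) : r x y := by
  obtain ⟨i, rfl⟩ := h
  induction i using Int.induction_on with
  | zero => exact r.refl x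
  | succ i ih => exact r.trans ih (by rw [add_comm, zpow_one_add, mul_apply]; exact hr _)
  | pred i ih =>
    have hstep : f ((f ^ (-(i : ℤ) - 1)) x) = (f ^ (-(i : ℤ))) x := by
      rw [← mul_apply, ← zpow_one_add, add_sub_cancel]
    exact r.trans ih (r.symm (hstep ▸ hr _))

section MergedCycles

variable (f : Perm α) (p q : α)

def mergedCycles : Setoid α where
  r x y := f.SameCycle x y ∨
    ((f.SameCycle p x ∨ f.SameCycle q x) ∧ (f.SameCycle p y ∨ f.SameCycle q y))
  iseqv.refl x := .inl (.refl f x)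
  iseqv.symm := by
    rintro x y (h | ⟨hx, hy⟩)
    exacts [.inl h.symm, .inr ⟨hy, hx⟩]
  iseqv.trans := by
    rintro x y z (hxy | ⟨hx, hy⟩) (hyz | ⟨hy', hz⟩)
    · exact .inl (hxy.trans hyz)
    · exact .inr ⟨hy'.imp (·.trans hxy.symm) (·.trans hxy.symm), hz⟩
    · exact .inr ⟨hx, hy.imp (·.trans hyz) (·.trans hyz)⟩
    · exact .inr ⟨hx, hz⟩

theorem sameCycle_setoid_le_mergedCycles : SameCycle.setoid f ≤ mergedCycles f p q :=
  fun _ _ => .inl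

variable {f p q} in
theorem mergedCycles_le_sameCycle_setoid (h : f.SameCycle p q) :
    mergedCycles f p q ≤ SameCycle.setoid f := by
  have hp : ∀ z, f.SameCycle p z ∨ f.SameCycle q z → f.SameCycle p z :=
    fun z hz => hz.elim id h.trans
  rintro x y (hxy | ⟨hx, hy⟩)
  exacts [hxy, ((hp x hx).symm.trans (hp y hy))]

variable {f p q} in
theorem sameCycle_or_of_mergedCycles {x y : α} (h : mergedCycles f p q x y) :
    f.SameCycle x y ∨ f.SameCycle x q ∨ f.SameCycle y q := by
  rcases h with h | ⟨hx | hx, hy | hy⟩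
  exacts [.inl h, .inl (hx.symm.trans hy), .inr (.inr hy.symm), .inr (.inl hx.symm),
    .inr (.inl hx.symm)]

variable [DecidableEq α]

theorem sameCycle_setoid_swap_mul_le_mergedCycles :
    SameCycle.setoid (swap p q * f) ≤ mergedCycles f p q := by
  refine fun x y => SameCycle.rel_of_forall_rel_apply fun z => ?_
  have hz : f.SameCycle z (f z) := sameCycle_apply_right.2 (.refl f z)
  rw [mul_apply, swap_apply_def]
  split_ifs with hp hq
  · exact .inr ⟨.inl (hp ▸ hz.symm), .inr (.refl f q)⟩
  · exact .inr ⟨.inr (hq ▸ hz.symm), .inl (.refl f p)⟩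
  · exact .inl hz

variable [Finite α]

theorem card_quotient_sameCycle_le_swap_mul_add_one :
    Nat.card (Quotient (SameCycle.setoid f)) ≤
      Nat.card (Quotient (SameCycle.setoid (swap p q * f))) + 1 :=
  (Setoid.nat_card_quotient_le_add_one (sameCycle_setoid_le_mergedCycles f p q) q
    fun _ _ => sameCycle_or_of_mergedCycles).trans
      (Nat.add_le_add_right (Setoid.nat_card_quotient_le_of_le
        (sameCycle_setoid_swap_mul_le_mergedCycles f p q)) 1)

variable {f p q} in
theorem card_quotient_sameCycle_le_swap_mul (h : f.SameCycle p q) :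
    Nat.card (Quotient (SameCycle.setoid f)) ≤
      Nat.card (Quotient (SameCycle.setoid (swap p q * f))) :=
  (Setoid.nat_card_quotient_le_of_le (mergedCycles_le_sameCycle_setoid h)).trans
    (Setoid.nat_card_quotient_le_of_le (sameCycle_setoid_swap_mul_le_mergedCycles f p q))

end MergedCycles

end Equiv.Perm

section Kappa

variable {n : ℕ}

theorem kappa_eq_card_quotient (g : Perm (Fin n)) :
    kappa g = Nat.card (Quotient (SameCycle.setoid g)) := by
  classical
  let F (x : Fin n) : {x // x ∉ g.support} ⊕ g.cycleFactorsFinset :=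
    if hx : x ∈ g.support then .inr ⟨g.cycleOf x, cycleOf_mem_cycleFactorsFinset_iff.2 hx⟩
    else .inl ⟨x, hx⟩
  have hker : Setoid.ker F = SameCycle.setoid g := by
    ext x y
    change F x = F y ↔ g.SameCycle x y
    by_cases hx : x ∈ g.support <;> by_cases hy : y ∈ g.support <;>
      simp only [F, hx, hy, dite_true, dite_false, Sum.inr.injEq, Sum.inl.injEq, Subtype.mk.injEq,
        reduceCtorEq, false_iff]
    · exact (sameCycle_iff_cycleOf_eq_of_mem_support hx hy).symm
    · exact fun h => hy (mem_support.2 fun hfix => mem_support.1 hx (h.apply_eq_self_iff.2 hfix))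
    · exact fun h => hx (mem_support.2 fun hfix => mem_support.1 hy (h.apply_eq_self_iff.1 hfix))
    · exact ⟨fun h => h ▸ SameCycle.refl g x, fun h => h.eq_of_left (notMem_support.1 hx)⟩
  have hsurj : Function.Surjective F := by
    rintro (⟨x, hx⟩ | ⟨c, hc⟩)
    · exact ⟨x, dif_neg hx⟩
    · obtain ⟨x, hxc⟩ := (mem_cycleFactorsFinset_iff.1 hc).1.nonempty_support
      have hx := mem_cycleFactorsFinset_support_le hc hxc
      exact ⟨x, by simp only [F, dif_pos hx, (cycle_is_cycleOf hxc hc).symm]⟩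
  rw [← hker, Nat.card_congr (Setoid.quotientKerEquivOfSurjective F hsurj), Nat.card_sum,
    Nat.card_eq_fintype_card, Fintype.card_subtype_compl, Fintype.card_fin, Fintype.card_coe,
    Nat.card_eq_finsetCard, kappa, cycleType_def, Multiset.card_map, add_comm, Finset.card_val]

theorem kappa_le (g : Perm (Fin n)) : kappa g ≤ n :=
  (kappa_eq_card_quotient g).trans_le
    ((Nat.card_le_card_of_surjective _ Quotient.mk_surjective).trans_eq (Nat.card_fin n))

@[simp]
theorem kappa_one : kappa (1 : Perm (Fin n)) = n := by
  simp [kappa]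

theorem kappa_conj (g τ : Perm (Fin n)) : kappa (τ * g * τ⁻¹) = kappa g := by
  simp [kappa]

theorem kappa_mul_comm (g h : Perm (Fin n)) : kappa (g * h) = kappa (h * g) := by
  simpa [mul_assoc] using kappa_conj (h * g) g

theorem neg_one_pow_kappa_mul_sign (g : Perm (Fin n)) :
    (-1 : ℤˣ) ^ kappa g * sign g = (-1) ^ n := by
  have hsupp : g.support.card ≤ n := by simpa using Finset.card_le_univ g.support
  have hexp : kappa g + (g.cycleType.sum + g.cycleType.card) = n + 2 * g.cycleType.card := by
    rw [kappa, sum_cycleType]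
    omega
  rw [sign_of_cycleType, ← pow_add, hexp, pow_add, pow_mul]
  simp

theorem kappa_swap_mul_ne (g : Perm (Fin n)) {p q : Fin n} (hpq : p ≠ q) :
    kappa (swap p q * g) ≠ kappa g := by
  intro h
  have := neg_one_pow_kappa_mul_sign (swap p q * g)
  rw [h, Perm.sign_mul, sign_swap hpq, neg_one_mul, mul_neg, neg_one_pow_kappa_mul_sign] at this
  exact neg_units_ne_self _ this

theorem kappa_le_kappa_swap_mul_add_one (g : Perm (Fin n)) (p q : Fin n) :
    kappa g ≤ kappa (swap p q * g) + 1 := by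
  simpa only [kappa_eq_card_quotient] using card_quotient_sameCycle_le_swap_mul_add_one g p q

theorem kappa_swap_mul_of_sameCycle {g : Perm (Fin n)} {p q : Fin n} (hpq : p ≠ q)
    (h : g.SameCycle p q) : kappa (swap p q * g) = kappa g + 1 := by
  have hle : kappa g ≤ kappa (swap p q * g) := by
    simpa only [kappa_eq_card_quotient] using card_quotient_sameCycle_le_swap_mul h
  have hge := kappa_le_kappa_swap_mul_add_one (swap p q * g) p q
  rw [swap_mul_self_mul] at hge
  have := kappa_swap_mul_ne g hpq
  omega

theorem kappa_le_kappa_sgen_mul_add_one (g : Perm (Fin n)) (i : ℕ) :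
    kappa g ≤ kappa (sgen n i * g) + 1 := by
  unfold sgen
  split_ifs
  · exact kappa_le_kappa_swap_mul_add_one g _ _
  · simp

end Kappa

def wordProd (n : ℕ) (b : List ℕ) : Perm (Fin n) := (b.map (sgen n)).prod

@[simp]
theorem wordProd_nil (n : ℕ) : wordProd n [] = 1 := rfl

@[simp]
theorem wordProd_cons (n i : ℕ) (b : List ℕ) :
    wordProd n (i :: b) = sgen n i * wordProd n b :=
  List.prod_cons

section Words

variable {n : ℕ}

theorem sgen_inv (i : ℕ) : (sgen n i)⁻¹ = sgen n i := by
  unfold sgen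
  split_ifs <;> simp

theorem sgen_eq_swap_of_apply_lt {i : ℕ} {x y : Fin n} (hxy : x < y)
    (h : sgen n i y < sgen n i x) : sgen n i = swap x y := by
  unfold sgen at h ⊢
  split_ifs at h ⊢ with hi
  · obtain ⟨rfl, rfl⟩ : x = ⟨i, Nat.lt_of_succ_lt hi⟩ ∧ y = ⟨i + 1, hi⟩ := by
      simp only [swap_apply_def] at h
      split_ifs at h <;> simp only [Fin.ext_iff, Fin.lt_def] at * <;> omega
    rfl
  · exact absurd h (not_lt.2 hxy.le)

theorem exists_lt_apply_and_apply_apply_lt {x : Perm (Fin n)} (hx : x ≠ 1) :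
    ∃ p, p < x p ∧ x (x p) < x p := by
  classical
  have hne : x.support.Nonempty :=
    Finset.nonempty_iff_ne_empty.2 (support_eq_empty_iff.not.2 hx)
  obtain ⟨p, hp⟩ := x.surjective (x.support.max' hne)
  have hmax : ∀ z ∈ x.support, z ≤ x p := hp ▸ x.support.le_max'
  have hpx : x p ∈ x.support := hp ▸ x.support.max'_mem hne
  have hp : p ∈ x.support := apply_mem_support.1 hpx
  exact ⟨p, (hmax p hp).lt_of_ne (mem_support.1 hp).symm,
    (hmax _ (apply_mem_support.2 hpx)).lt_of_ne (mem_support.1 hpx)⟩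

theorem exists_sublist_wordProd_eq_mul_swap {b : List ℕ} {p q : Fin n} (hpq : p < q)
    (h : wordProd n b q < wordProd n b p) :
    ∃ c : List ℕ, c.Sublist b ∧ c.length + 1 = b.length ∧
      wordProd n c = wordProd n b * swap p q := by
  induction b with
  | nil => exact absurd (h.trans hpq) (lt_irrefl _)
  | cons i b ih =>
    rw [wordProd_cons, mul_apply, mul_apply] at h
    by_cases hb : wordProd n b q < wordProd n b p
    · obtain ⟨c, hsub, hlen, hprod⟩ := ih hb
      exact ⟨i :: c, hsub.cons_cons i, by simp [hlen], by simp [hprod, mul_assoc]⟩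
    · have hlt : wordProd n b p < wordProd n b q :=
        (not_lt.1 hb).lt_of_ne ((wordProd n b).injective.ne hpq.ne)
      refine ⟨b, List.sublist_cons_self i b, rfl, ?_⟩
      rw [wordProd_cons, sgen_eq_swap_of_apply_lt hlt h, swap_apply_apply]
      simp [mul_assoc]

theorem sub_kappa_add_length_le_of_sublist {b c : List ℕ} (h : c.Sublist b) :
    n - kappa ((wordProd n b)⁻¹ * wordProd n c) + c.length ≤ b.length := by
  induction h with
  | slnil => simp
  | @cons c b i _ ih =>
    have hconj : kappa ((wordProd n (i :: b))⁻¹ * wordProd n c) =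
        kappa (sgen n i * (wordProd n c * (wordProd n b)⁻¹)) := by
      rw [wordProd_cons, mul_inv_rev, sgen_inv, mul_assoc, kappa_mul_comm, mul_assoc]
    have := kappa_le_kappa_sgen_mul_add_one (wordProd n c * (wordProd n b)⁻¹) i
    rw [kappa_mul_comm] at ih
    rw [hconj, List.length_cons]
    omega
  | @cons_cons c b i _ ih =>
    simpa [mul_assoc, ← add_assoc] using ih

theorem exists_sublist_wordProd_eq_revPerm_mul {a : List ℕ} (ha : wordProd n a = Fin.revPerm)
    (x : Perm (Fin n)) :
    ∃ c : List ℕ, c.Sublist a ∧ wordProd n c = Fin.revPerm * x ∧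
      c.length + (n - kappa x) = a.length := by
  by_cases hx : x = 1
  · exact ⟨a, .refl a, by rw [ha, hx, mul_one], by simp [hx]⟩
  obtain ⟨p, hp, hxp⟩ := exists_lt_apply_and_apply_apply_lt hx
  have hsplit : kappa (x * swap p (x p)) = kappa x + 1 := by
    rw [kappa_mul_comm]
    exact kappa_swap_mul_of_sameCycle hp.ne (sameCycle_apply_right.2 (.refl x p))
  have := kappa_le (x * swap p (x p))
  obtain ⟨c, hsub, hprod, hlen⟩ := exists_sublist_wordProd_eq_revPerm_mul ha (x * swap p (x p))
  have hdesc : wordProd n c (x p) < wordProd n c p := by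
    simpa [hprod] using Fin.rev_lt_rev.2 hxp
  obtain ⟨d, hdc, hdlen, hdprod⟩ := exists_sublist_wordProd_eq_mul_swap hp hdesc
  exact ⟨d, hdc.trans hsub, by rw [hdprod, hprod, mul_assoc, mul_swap_mul_self], by omega⟩
termination_by n - kappa x
decreasing_by omega

end Words

theorem stmt17_general (n : ℕ) (w : Equiv.Perm (Fin n)) (a : List ℕ)
    (ha_len : a.length = n.choose 2)
    (ha_prod : (a.map (sgen n)).prod = (Fin.revPerm : Equiv.Perm (Fin n))) :
    IsGreatest {m : ℕ | ∃ bw : List ℕ, bw.Sublist a ∧ (bw.map (sgen n)).prod = w ∧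
        bw.length = m}
      (n.choose 2 - (n - kappa ((Fin.revPerm : Equiv.Perm (Fin n)) * w))) := by
  refine ⟨?_, ?_⟩
  · obtain ⟨c, hsub, hprod, hlen⟩ :=
      exists_sublist_wordProd_eq_revPerm_mul ha_prod (Fin.revPerm * w)
    exact ⟨c, hsub, hprod.trans (inv_mul_cancel_left Fin.revPerm w), by omega⟩
  · rintro m ⟨c, hsub, hprod, rfl⟩
    have := sub_kappa_add_length_le_of_sublist (n := n) hsub
    rw [show wordProd n a = Fin.revPerm from ha_prod, show wordProd n c = w from hprod,
      Perm.inv_def, Fin.revPerm_symm] at this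
    omega

/-- Let `w ∈ S_n`, let `w₀` be the longest permutation, and let `k` be
the maximal length of a subsequence `(b₁,…,b_k)` of a fixed reduced decomposition
`(a₁,…,a_{C(n,2)})` of `w₀` with `s_{b₁}⋯s_{b_k} = w`.  Then
`k = C(n,2) − (n − κ(w₀w))`. -/
theorem stmt17 (n : ℕ) (w : Equiv.Perm (Fin n)) (a : List ℕ)
    (ha_rng : ∀ i ∈ a, i + 1 < n)
    (ha_len : a.length = n.choose 2)
    (ha_prod : (a.map (sgen n)).prod = (Fin.revPerm : Equiv.Perm (Fin n))) :
    IsGreatest {m : ℕ | ∃ bw : List ℕ, bw.Sublist a ∧ (bw.map (sgen n)).prod = w ∧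
        bw.length = m}
      (n.choose 2 - (n - kappa ((Fin.revPerm : Equiv.Perm (Fin n)) * w))) :=
  stmt17_general n w a ha_len ha_prod
end
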